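/- arXiv:2505.00558 — 2 statements merged into one kernel-verified Lean document; each statement's English description precedes it below -/
import Mathlib

section
/- Let f : P(X)² → ℝ≥0 be a scoring function with f(P,Q)=0 iff P=Q and f continuous. Define η(P₁,P₂) := min over triples (Q₁,Q₂,Q₃) of distributions on X with f(Q₁,Q₂) ≤ f(Q₃,Q₂) of D(Q₁‖P₁)+D(Q₂‖P₂)+D(Q₃‖P₂). Then η(P₁,P₂) > 0 whenever P₁ ≠ P₂. -/
/-! Termwise, `log y ≥ 1 - 1/y` at `y = √(p/q)` gives `p log (p/q) ≥ (√p - √q)² + (p - q)`, so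
`D(Q‖P) ≥ ∑ₓ (√Q x - √P x)²`. Hence along triples whose objective tends to `0` we get
`Q₁ → P₁` and `Q₂, Q₃ → P₂`, and continuity of `f` turns `f(Q₁,Q₂) ≤ f(Q₃,Q₂)` into
`f(P₁,P₂) ≤ f(P₂,P₂) = 0`, i.e. `P₁ = P₂`. -/

open scoped BigOperators

noncomputable section

variable {X : Type*}

/-- `p` is a probability mass function on the finite alphabet `X`. -/
def IsProbVec [Fintype X] (p : X → ℝ) : Prop := (∀ x, 0 ≤ p x) ∧ ∑ x, p x = 1

/-- One term of the KL divergence, with the conventions `0 · log (0/q) = 0` and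
`p · log (p/0) = +∞` for `p > 0`. -/
def klTerm (p q : ℝ) : EReal :=
  if p = 0 then 0 else if q = 0 then ⊤ else ((p * Real.log (p / q) : ℝ) : EReal)

/-- Kullback–Leibler divergence `D(P‖Q)` on a finite alphabet, valued in `EReal`. -/
def KL [Fintype X] (P Q : X → ℝ) : EReal := ∑ x, klTerm (P x) (Q x)

/-- Generalized Jensen–Shannon divergence. -/
def GJS [Fintype X] (P Q : X → ℝ) : EReal :=
  KL P (fun x => (P x + Q x) / 2) + KL Q (fun x => (P x + Q x) / 2)

variable [Fintype X]

/-- The exponent function `η(P₁,P₂)`: infimum of `D(Q₁‖P₁)+D(Q₂‖P₂)+D(Q₃‖P₂)` over triples of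
distributions with `f(Q₁,Q₂) ≤ f(Q₃,Q₂)`. -/
def eta (f : (X → ℝ) → (X → ℝ) → ℝ) (P₁ P₂ : X → ℝ) : EReal :=
  ⨅ t : {t : (X → ℝ) × (X → ℝ) × (X → ℝ) //
      IsProbVec t.1 ∧ IsProbVec t.2.1 ∧ IsProbVec t.2.2 ∧ f t.1 t.2.1 ≤ f t.2.2 t.2.1},
    KL t.1.1 P₁ + KL t.1.2.1 P₂ + KL t.1.2.2 P₂

/-- The exponent function `Ω(P₁,P₂,λ)`: infimum of `D(Q₁‖P₁)+D(Q₂‖P₂)` over pairs of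
distributions with `f(Q₁,Q₂) ≤ λ`. -/
def Omega (f : (X → ℝ) → (X → ℝ) → ℝ) (P₁ P₂ : X → ℝ) (lam : ℝ) : EReal :=
  ⨅ t : {t : (X → ℝ) × (X → ℝ) // IsProbVec t.1 ∧ IsProbVec t.2 ∧ f t.1 t.2 ≤ lam},
    KL t.1.1 P₁ + KL t.1.2 P₂

/-- The exponent function `Υ(P,λ)`: infimum of `D(Q₁‖P)+D(Q₂‖P)` over pairs of distributions
with `f(Q₁,Q₂) ≥ λ` (the infimum over the empty set being `+∞`). -/
def Upsilon (f : (X → ℝ) → (X → ℝ) → ℝ) (P : X → ℝ) (lam : ℝ) : EReal :=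
  ⨅ t : {t : (X → ℝ) × (X → ℝ) // IsProbVec t.1 ∧ IsProbVec t.2 ∧ lam ≤ f t.1 t.2},
    KL t.1.1 P + KL t.1.2 P

/-- The exponent function `γ(P₁,P₂)`: infimum of `D(Q₁‖P₁)+D(Q₂‖P₁)+D(Q₃‖P₂)` over triples of
distributions with `f(Q₁,Q₃) ≤ f(Q₁,Q₂)`. -/
def gammaExp (f : (X → ℝ) → (X → ℝ) → ℝ) (P₁ P₂ : X → ℝ) : EReal :=
  ⨅ t : {t : (X → ℝ) × (X → ℝ) × (X → ℝ) //
      IsProbVec t.1 ∧ IsProbVec t.2.1 ∧ IsProbVec t.2.2 ∧ f t.1 t.2.2 ≤ f t.1 t.2.1},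
    KL t.1.1 P₁ + KL t.1.2.1 P₁ + KL t.1.2.2 P₂

/-- `min_Q D(Q‖P₁)+D(Q‖P₂)`, i.e. `Ω(P₁,P₂,0)` for a scoring function vanishing exactly on
the diagonal. -/
def OmegaZero (P₁ P₂ : X → ℝ) : EReal :=
  ⨅ Q : {q : X → ℝ // IsProbVec q}, KL Q.1 P₁ + KL Q.1 P₂

open Filter Topology Real

theorem EReal.coe_finset_sum {ι : Type*} (s : Finset ι) (g : ι → ℝ) :
    ((∑ i ∈ s, g i : ℝ) : EReal) = ∑ i ∈ s, (g i : EReal) :=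
  map_sum (⟨⟨(↑), EReal.coe_zero⟩, EReal.coe_add⟩ : ℝ →+ EReal) g s

theorem sqrt_sub_sq_add_sub_le_klTerm {p q : ℝ} (hp : 0 ≤ p) (hq : 0 ≤ q) :
    (((√p - √q) ^ 2 + (p - q) : ℝ) : EReal) ≤ klTerm p q := by
  rcases hp.eq_or_lt with rfl | hp
  · rw [klTerm, if_pos rfl, ← EReal.coe_zero, EReal.coe_le_coe_iff]
    simp [sq_sqrt hq]
  rcases hq.eq_or_lt with rfl | hq
  · simp [klTerm, hp.ne']
  rw [klTerm, if_neg hp.ne', if_neg hq.ne', EReal.coe_le_coe_iff]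
  obtain ⟨a, ha, rfl⟩ : ∃ a, 0 < a ∧ a ^ 2 = p := ⟨√p, sqrt_pos.2 hp, sq_sqrt hp.le⟩
  obtain ⟨b, hb, rfl⟩ : ∃ b, 0 < b ∧ b ^ 2 = q := ⟨√q, sqrt_pos.2 hq, sq_sqrt hq.le⟩
  have hlog : 2 * (1 - b / a) ≤ log (a ^ 2 / b ^ 2) := by
    have := one_sub_inv_le_log_of_pos (div_pos ha hb)
    rw [inv_div] at this
    rw [← div_pow, log_pow]
    push_cast
    linarith
  calc (√(a ^ 2) - √(b ^ 2)) ^ 2 + (a ^ 2 - b ^ 2) = a ^ 2 * (2 * (1 - b / a)) := by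
        rw [sqrt_sq ha.le, sqrt_sq hb.le]
        field_simp
        ring
    _ ≤ a ^ 2 * log (a ^ 2 / b ^ 2) := by gcongr

theorem sum_sqrt_sub_sq_le_KL {P Q : X → ℝ} (hP : IsProbVec P) (hQ : IsProbVec Q) :
    ((∑ x, (√(P x) - √(Q x)) ^ 2 : ℝ) : EReal) ≤ KL P Q :=
  calc ((∑ x, (√(P x) - √(Q x)) ^ 2 : ℝ) : EReal)
      = ((∑ x, ((√(P x) - √(Q x)) ^ 2 + (P x - Q x)) : ℝ) : EReal) := by
        rw [Finset.sum_add_distrib, Finset.sum_sub_distrib, hP.2, hQ.2, sub_self, add_zero]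
    _ = ∑ x, (((√(P x) - √(Q x)) ^ 2 + (P x - Q x) : ℝ) : EReal) := EReal.coe_finset_sum _ _
    _ ≤ KL P Q := Finset.sum_le_sum fun x _ => sqrt_sub_sq_add_sub_le_klTerm (hP.1 x) (hQ.1 x)

theorem KL_nonneg {P Q : X → ℝ} (hP : IsProbVec P) (hQ : IsProbVec Q) : 0 ≤ KL P Q :=
  (EReal.coe_nonneg.2 (by positivity)).trans (sum_sqrt_sub_sq_le_KL hP hQ)

theorem tendsto_of_tendsto_KL_zero {ι : Type*} {l : Filter ι} {Q : ι → X → ℝ} {P : X → ℝ}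
    (hQ : ∀ i, IsProbVec (Q i)) (hP : IsProbVec P)
    (h : Tendsto (fun i => KL (Q i) P) l (𝓝 0)) : Tendsto Q l (𝓝 P) := by
  have hH : Tendsto (fun i => ∑ x, (√(Q i x) - √(P x)) ^ 2) l (𝓝 0) := by
    rw [← EReal.tendsto_coe, EReal.coe_zero]
    exact tendsto_of_tendsto_of_tendsto_of_le_of_le tendsto_const_nhds h
      (fun i => EReal.coe_nonneg.2 (by positivity)) (fun i => sum_sqrt_sub_sq_le_KL (hQ i) hP)
  refine tendsto_pi_nhds.2 fun x => ?_
  have hsq : Tendsto (fun i => (√(Q i x) - √(P x)) ^ 2) l (𝓝 0) :=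
    squeeze_zero (fun i => sq_nonneg _)
      (fun i => Finset.single_le_sum (f := fun y => (√(Q i y) - √(P y)) ^ 2)
        (fun y _ => sq_nonneg _) (Finset.mem_univ x)) hH
  have hsqrt : Tendsto (fun i => √(Q i x) - √(P x)) l (𝓝 0) :=
    (tendsto_zero_iff_abs_tendsto_zero _).2 <| by
      simpa [Function.comp_def, sqrt_sq_eq_abs] using hsq.sqrt
  simpa [sq_sqrt ((hQ _).1 x), sq_sqrt (hP.1 x)] using (hsqrt.add_const (√(P x))).pow 2

theorem neBot_comap_nhds_iInf {ι α : Type*} [Nonempty ι] [CompleteLinearOrder α]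
    [TopologicalSpace α] [OrderTopology α] (g : ι → α) : (comap g (𝓝 (⨅ i, g i))).NeBot := by
  have := (isGLB_iInf (f := g)).mem_closure (Set.range_nonempty g)
  rw [mem_closure_iff_nhds] at this
  refine comap_neBot fun t ht => ?_
  obtain ⟨_, hy, i, rfl⟩ := this t ht
  exact ⟨i, hy⟩

theorem tendsto_of_tendsto_KL_add_KL_add_KL_zero {ι : Type*} {l : Filter ι}
    {Q₁ Q₂ Q₃ : ι → X → ℝ} {P₁ P₂ P₃ : X → ℝ}
    (hQ : ∀ i, IsProbVec (Q₁ i) ∧ IsProbVec (Q₂ i) ∧ IsProbVec (Q₃ i))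
    (hP₁ : IsProbVec P₁) (hP₂ : IsProbVec P₂) (hP₃ : IsProbVec P₃)
    (h : Tendsto (fun i => KL (Q₁ i) P₁ + KL (Q₂ i) P₂ + KL (Q₃ i) P₃) l (𝓝 0)) :
    Tendsto Q₁ l (𝓝 P₁) ∧ Tendsto Q₂ l (𝓝 P₂) ∧ Tendsto Q₃ l (𝓝 P₃) := by
  have hD₁ i : 0 ≤ KL (Q₁ i) P₁ := KL_nonneg (hQ i).1 hP₁
  have hD₂ i : 0 ≤ KL (Q₂ i) P₂ := KL_nonneg (hQ i).2.1 hP₂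
  have hD₃ i : 0 ≤ KL (Q₃ i) P₃ := KL_nonneg (hQ i).2.2 hP₃
  have hsmall (u : ι → EReal) (hu₀ : ∀ i, 0 ≤ u i)
      (hu : ∀ i, u i ≤ KL (Q₁ i) P₁ + KL (Q₂ i) P₂ + KL (Q₃ i) P₃) : Tendsto u l (𝓝 0) :=
    tendsto_of_tendsto_of_tendsto_of_le_of_le tendsto_const_nhds h hu₀ hu
  refine ⟨?_, ?_, ?_⟩
  · exact tendsto_of_tendsto_KL_zero (fun i => (hQ i).1) hP₁ <| hsmall _ hD₁ fun i =>
      le_add_of_le_of_nonneg (le_add_of_nonneg_right (hD₂ i)) (hD₃ i)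
  · exact tendsto_of_tendsto_KL_zero (fun i => (hQ i).2.1) hP₂ <| hsmall _ hD₂ fun i =>
      le_add_of_le_of_nonneg (le_add_of_nonneg_left (hD₁ i)) (hD₃ i)
  · exact tendsto_of_tendsto_KL_zero (fun i => (hQ i).2.2) hP₃ <| hsmall _ hD₃ fun i =>
      le_add_of_nonneg_left (add_nonneg (hD₁ i) (hD₂ i))

theorem eta_pos_general (f : (X → ℝ) → (X → ℝ) → ℝ)
    (hf0 : ∀ P Q, IsProbVec P → IsProbVec Q → 0 ≤ f P Q)
    (hfz : ∀ P Q, IsProbVec P → IsProbVec Q → (f P Q = 0 ↔ P = Q))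
    (hfc : ContinuousOn (fun pq : (X → ℝ) × (X → ℝ) => f pq.1 pq.2)
      {pq | IsProbVec pq.1 ∧ IsProbVec pq.2})
    (P₁ P₂ : X → ℝ) (hP₁ : IsProbVec P₁) (hP₂ : IsProbVec P₂) (hne : P₁ ≠ P₂) :
    0 < eta f P₁ P₂ := by
  by_contra! hle
  let T := {t : (X → ℝ) × (X → ℝ) × (X → ℝ) //
      IsProbVec t.1 ∧ IsProbVec t.2.1 ∧ IsProbVec t.2.2 ∧ f t.1 t.2.1 ≤ f t.2.2 t.2.1}
  let g : T → EReal := fun t => KL t.1.1 P₁ + KL t.1.2.1 P₂ + KL t.1.2.2 P₂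
  have : Nonempty T := ⟨⟨(P₂, P₂, P₂), hP₂, hP₂, hP₂, le_rfl⟩⟩
  have hη : ⨅ t, g t = 0 := le_antisymm hle <| le_iInf fun t =>
    add_nonneg (add_nonneg (KL_nonneg t.2.1 hP₁) (KL_nonneg t.2.2.1 hP₂)) (KL_nonneg t.2.2.2.1 hP₂)
  -- the filter of nearly optimal triples
  let l := comap g (𝓝 0)
  have : l.NeBot := by simpa only [hη] using neBot_comap_nhds_iInf g
  obtain ⟨hQ₁, hQ₂, hQ₃⟩ := tendsto_of_tendsto_KL_add_KL_add_KL_zero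
    (fun t : T => ⟨t.2.1, t.2.2.1, t.2.2.2.1⟩) hP₁ hP₂ hP₂ tendsto_comap
  have hf₁₂ : Tendsto (fun t : T => f t.1.1 t.1.2.1) l (𝓝 (f P₁ P₂)) :=
    (hfc _ ⟨hP₁, hP₂⟩).tendsto.comp <| tendsto_nhdsWithin_iff.2
      ⟨hQ₁.prodMk_nhds hQ₂, .of_forall fun t => ⟨t.2.1, t.2.2.1⟩⟩
  have hf₃₂ : Tendsto (fun t : T => f t.1.2.2 t.1.2.1) l (𝓝 (f P₂ P₂)) :=
    (hfc _ ⟨hP₂, hP₂⟩).tendsto.comp <| tendsto_nhdsWithin_iff.2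
      ⟨hQ₃.prodMk_nhds hQ₂, .of_forall fun t => ⟨t.2.2.2.1, t.2.2.1⟩⟩
  have hf_le : f P₁ P₂ ≤ f P₂ P₂ := le_of_tendsto_of_tendsto' hf₁₂ hf₃₂ fun t => t.2.2.2.2
  rw [(hfz P₂ P₂ hP₂ hP₂).2 rfl] at hf_le
  exact hne <| (hfz P₁ P₂ hP₁ hP₂).1 (hf_le.antisymm (hf0 P₁ P₂ hP₁ hP₂))

/-- `η(P₁,P₂) > 0` whenever `P₁ ≠ P₂`, for any continuous scoring function vanishing exactly
on the diagonal. -/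
theorem eta_pos [Nonempty X] (f : (X → ℝ) → (X → ℝ) → ℝ)
    (hf0 : ∀ P Q, IsProbVec P → IsProbVec Q → 0 ≤ f P Q)
    (hfz : ∀ P Q, IsProbVec P → IsProbVec Q → (f P Q = 0 ↔ P = Q))
    (hfc : ContinuousOn (fun pq : (X → ℝ) × (X → ℝ) => f pq.1 pq.2)
      {pq | IsProbVec pq.1 ∧ IsProbVec pq.2})
    (P₁ P₂ : X → ℝ) (hP₁ : IsProbVec P₁) (hP₂ : IsProbVec P₂) (hne : P₁ ≠ P₂) :
    0 < eta f P₁ P₂ :=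
  eta_pos_general f hf0 hfz hfc P₁ P₂ hP₁ hP₂ hne
end
end

section
/- Let P be a distribution on a finite alphabet X, and suppose X^n and Y^n are independent sequences, each drawn i.i.d. from P. Fix a continuous scoring function f : P(X)² → ℝ≥0 and λ > 0. Then the probability that f(T̂_{X^n}, T̂_{Y^n}) > λ is at most (n+1)^{2|X|} · exp(−n·Υ(P,λ)), where Υ(P,λ) := inf over pairs (Q₁,Q₂) with f(Q₁,Q₂) ≥ λ of D(Q₁‖P)+D(Q₂‖P). -/
open scoped BigOperators

noncomputable section

variable {X : Type*}

variable [Fintype X]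

/-- Empirical distribution (type) of a length-`n` sequence. -/
def empDist [DecidableEq X] (n : ℕ) (x : Fin n → X) : X → ℝ :=
  fun a => ((Finset.univ.filter (fun i => x i = a)).card : ℝ) / n

/-!
For a sequence `x` of type `T`, `Pⁿ(x) = exp(−n·D(T‖P)) · Tⁿ(x)`, both sides vanishing when
`D(T‖P) = ∞`. If the types `T_x, T_y` of a pair have score above `λ`, the pair `(T_x, T_y)` is
admissible in the infimum defining `Υ(P,λ)`, so `Pⁿ(x)Pⁿ(y) ≤ exp(−n·Υ) · T_xⁿ(x) T_yⁿ(y)`.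
The weights `Tⁿ(x)` of the sequences of a fixed type `T` sum to at most `1`, and there are at most
`(n+1)^|X|` types, which bounds the sum over all pairs by `(n+1)^{2|X|}`.
-/

open Finset
open scoped ENNReal

theorem EReal.exp_neg_natCast_mul_add (n : ℕ) {a b : EReal} (ha : a ≠ ⊥) (hb : b ≠ ⊥) :
    EReal.exp (-(n : EReal) * (a + b)) =
      EReal.exp (-(n : EReal) * a) * EReal.exp (-(n : EReal) * b) := by
  rw [← EReal.exp_add]
  congr 1
  rcases n.eq_zero_or_pos with rfl | hn
  · simp
  have hneg : -(n : EReal) < 0 := by simpa using hn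
  induction a using EReal.rec with
  | bot => exact absurd rfl ha
  | top => simp [EReal.top_add_of_ne_bot hb, EReal.mul_top_of_neg hneg]
  | coe a =>
    induction b using EReal.rec with
    | bot => exact absurd rfl hb
    | top => simp [EReal.mul_top_of_neg hneg]
    | coe b =>
      rw [← EReal.coe_coe_eq_natCast, ← EReal.coe_neg, ← EReal.coe_add]
      norm_cast; ring

theorem EReal.sum_ne_bot {ι : Type*} {s : Finset ι} {k : ι → EReal} (hk : ∀ i ∈ s, k i ≠ ⊥) :
    ∑ i ∈ s, k i ≠ ⊥ :=
  sum_induction _ (· ≠ ⊥) (fun _ _ ha hb => EReal.add_ne_bot_iff.2 ⟨ha, hb⟩)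
    EReal.zero_ne_bot hk

theorem EReal.exp_neg_natCast_mul_sum {ι : Type*} (n : ℕ) (s : Finset ι) (k : ι → EReal)
    (hk : ∀ i ∈ s, k i ≠ ⊥) :
    EReal.exp (-(n : EReal) * ∑ i ∈ s, k i) = ∏ i ∈ s, EReal.exp (-(n : EReal) * k i) := by
  classical
  induction s using Finset.induction_on with
  | empty => simp
  | insert i s hi ih =>
    rw [sum_insert hi, prod_insert hi,
      EReal.exp_neg_natCast_mul_add n (hk i (by simp))
        (EReal.sum_ne_bot fun j hj => hk j (by simp [hj])), ih fun j hj => hk j (by simp [hj])]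

theorem klTerm_ne_bot (t p : ℝ) : klTerm t p ≠ ⊥ := by
  unfold klTerm
  split_ifs
  exacts [EReal.zero_ne_bot, top_ne_bot, EReal.coe_ne_bot _]

theorem ofReal_pow_eq_exp_neg_mul_klTerm {n c : ℕ} {t p : ℝ} (hp : 0 ≤ p)
    (hc : (c : ℝ) = n * t) :
    ENNReal.ofReal (p ^ c) = EReal.exp (-(n : EReal) * klTerm t p) * ENNReal.ofReal (t ^ c) := by
  rcases n.eq_zero_or_pos with rfl | hn
  · obtain rfl : c = 0 := by simpa using hc
    simp
  by_cases ht : t = 0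
  · obtain rfl : c = 0 := by simpa [ht] using hc
    simp [klTerm, ht]
  have hc0 : c ≠ 0 := by
    rintro rfl
    simp [hn.ne', ht] at hc
  have htpos : 0 < t := by
    have : (0 : ℝ) < n * t := hc ▸ (by positivity)
    exact pos_of_mul_pos_right this (Nat.cast_nonneg n)
  rcases hp.eq_or_lt with rfl | hp
  · have : -(n : EReal) < 0 := by simpa using hn
    simp [klTerm, ht, hc0, EReal.mul_top_of_neg this]
  rw [klTerm, if_neg ht, if_neg hp.ne', ← EReal.coe_coe_eq_natCast, ← EReal.coe_neg,
    ← EReal.coe_mul, EReal.exp_coe, ← ENNReal.ofReal_mul (Real.exp_nonneg _)]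
  congr 1
  have hlog : -(n : ℝ) * (t * Real.log (t / p)) = c * Real.log (p / t) := by
    rw [hc, Real.log_div htpos.ne' hp.ne', Real.log_div hp.ne' htpos.ne']
    ring
  rw [hlog, Real.exp_nat_mul, Real.exp_log (div_pos hp htpos), div_pow,
    div_mul_cancel₀ _ (pow_ne_zero _ htpos.ne')]

theorem Upsilon_le_KL_add {f : (X → ℝ) → (X → ℝ) → ℝ} {P Q₁ Q₂ : X → ℝ} {lam : ℝ}
    (hQ₁ : IsProbVec Q₁) (hQ₂ : IsProbVec Q₂) (h : lam ≤ f Q₁ Q₂) :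
    Upsilon f P lam ≤ KL Q₁ P + KL Q₂ P :=
  iInf_le_of_le ⟨(Q₁, Q₂), hQ₁, hQ₂, h⟩ le_rfl

theorem KL_ne_bot (Q P : X → ℝ) : KL Q P ≠ ⊥ :=
  EReal.sum_ne_bot fun _ _ => klTerm_ne_bot _ _

theorem sum_ofReal_prod_eq_one {Q : X → ℝ} (hQ : IsProbVec Q) (n : ℕ) :
    ∑ x : Fin n → X, ENNReal.ofReal (∏ i, Q (x i)) = 1 := by
  rw [← ENNReal.ofReal_sum_of_nonneg fun x _ => prod_nonneg fun i _ => hQ.1 (x i),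
    ← Fintype.sum_pow, hQ.2, one_pow, ENNReal.ofReal_one]

section EmpiricalDistribution

variable [DecidableEq X]

omit [Fintype X] in
theorem card_filter_eq_mul_empDist (n : ℕ) (x : Fin n → X) (a : X) :
    (#{i | x i = a} : ℝ) = n * empDist n x a := by
  rcases n.eq_zero_or_pos with rfl | hn
  · simp
  · rw [empDist, mul_div_cancel₀ _ (by positivity)]

omit [Fintype X] in
theorem empDist_nonneg (n : ℕ) (x : Fin n → X) (a : X) : 0 ≤ empDist n x a := by
  unfold empDist
  positivity

theorem isProbVec_empDist {n : ℕ} (hn : 0 < n) (x : Fin n → X) : IsProbVec (empDist n x) := by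
  refine ⟨empDist_nonneg n x, ?_⟩
  have hcard : ∑ a, #{i | x i = a} = n := by
    rw [← card_eq_sum_card_fiberwise fun i _ => mem_univ (x i), card_univ, Fintype.card_fin]
  simp only [empDist, ← sum_div, ← Nat.cast_sum, hcard]
  exact div_self (by positivity)

theorem ofReal_prod_eq_exp_neg_mul_KL_mul {n : ℕ} {P : X → ℝ} (hP : ∀ a, 0 ≤ P a)
    (x : Fin n → X) :
    ENNReal.ofReal (∏ i, P (x i)) =
      EReal.exp (-(n : EReal) * KL (empDist n x) P) *
        ENNReal.ofReal (∏ i, empDist n x (x i)) := by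
  simp only [← prod_fiberwise' univ x, prod_const]
  rw [KL, EReal.exp_neg_natCast_mul_sum _ _ _ fun a _ => klTerm_ne_bot _ _,
    ENNReal.ofReal_prod_of_nonneg fun a _ => pow_nonneg (hP a) _,
    ENNReal.ofReal_prod_of_nonneg fun a _ => pow_nonneg (empDist_nonneg n x a) _,
    ← prod_mul_distrib]
  exact prod_congr rfl fun a _ =>
    ofReal_pow_eq_exp_neg_mul_klTerm (hP a) (card_filter_eq_mul_empDist n x a)

theorem card_image_empDist_le (n : ℕ) :
    #(univ.image (empDist (X := X) n)) ≤ (n + 1) ^ Fintype.card X := by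
  let count : (Fin n → X) → X → Fin (n + 1) := fun x a =>
    ⟨#{i | x i = a}, Nat.lt_succ_of_le ((card_filter_le _ _).trans_eq (card_fin n))⟩
  have hfactor : univ.image (empDist n) = (univ.image count).image fun c a => (c a : ℝ) / n := by
    rw [image_image]
    rfl
  calc #(univ.image (empDist n)) ≤ #(univ.image count) := hfactor ▸ card_image_le
    _ ≤ #(univ : Finset (X → Fin (n + 1))) := card_le_univ _
    _ = (n + 1) ^ Fintype.card X := by simp

theorem sum_ofReal_prod_empDist_le {n : ℕ} (hn : 0 < n) :
    ∑ x : Fin n → X, ENNReal.ofReal (∏ i, empDist n x (x i)) ≤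
      ((n : ℝ≥0∞) + 1) ^ Fintype.card X := by
  rw [← sum_fiberwise_of_maps_to (t := univ.image (empDist n))
    fun x _ => mem_image_of_mem _ (mem_univ x)]
  have htypeClass : ∀ Q ∈ univ.image (empDist n),
      ∑ x : Fin n → X with empDist n x = Q, ENNReal.ofReal (∏ i, empDist n x (x i)) ≤ 1 := by
    intro Q hQ
    obtain ⟨y, -, rfl⟩ := mem_image.1 hQ
    calc ∑ x : Fin n → X with empDist n x = empDist n y, ENNReal.ofReal (∏ i, empDist n x (x i))
        = ∑ x : Fin n → X with empDist n x = empDist n y,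
            ENNReal.ofReal (∏ i, empDist n y (x i)) :=
          sum_congr rfl fun x hx => by rw [(mem_filter.1 hx).2]
      _ ≤ ∑ x : Fin n → X, ENNReal.ofReal (∏ i, empDist n y (x i)) :=
          sum_le_sum_of_subset (filter_subset _ _)
      _ = 1 := sum_ofReal_prod_eq_one (isProbVec_empDist hn y) n
  calc _ ≤ ∑ _Q ∈ univ.image (empDist n), (1 : ℝ≥0∞) := sum_le_sum htypeClass
    _ = #(univ.image (empDist (X := X) n)) := by rw [sum_const, nsmul_one]
    _ ≤ ((n : ℝ≥0∞) + 1) ^ Fintype.card X := by exact_mod_cast card_image_empDist_le n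

theorem ofReal_prod_mul_prod_le_exp_neg_mul_Upsilon_mul {f : (X → ℝ) → (X → ℝ) → ℝ}
    {P : X → ℝ} (hP : ∀ a, 0 ≤ P a) {n : ℕ} (hn : 0 < n) {lam : ℝ} {x y : Fin n → X}
    (hxy : lam ≤ f (empDist n x) (empDist n y)) :
    ENNReal.ofReal ((∏ i, P (x i)) * ∏ i, P (y i)) ≤
      EReal.exp (-(n : EReal) * Upsilon f P lam) *
        (ENNReal.ofReal (∏ i, empDist n x (x i)) * ENNReal.ofReal (∏ i, empDist n y (y i))) := by
  have hU : Upsilon f P lam ≤ KL (empDist n x) P + KL (empDist n y) P :=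
    Upsilon_le_KL_add (isProbVec_empDist hn x) (isProbVec_empDist hn y) hxy
  rw [ENNReal.ofReal_mul (prod_nonneg fun i _ => hP _), ofReal_prod_eq_exp_neg_mul_KL_mul hP x,
    ofReal_prod_eq_exp_neg_mul_KL_mul hP y, mul_mul_mul_comm,
    ← EReal.exp_neg_natCast_mul_add n (KL_ne_bot _ _) (KL_ne_bot _ _)]
  refine mul_le_mul_left (EReal.exp_monotone ?_) _
  rw [mul_comm, mul_comm (-(n : EReal))]
  exact EReal.mul_le_mul_of_nonpos_right hU (by simp)

end EmpiricalDistribution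

open Classical in
theorem prob_score_gt_bound_general [DecidableEq X]
    (f : (X → ℝ) → (X → ℝ) → ℝ)
    (P : X → ℝ) (hP : IsProbVec P)
    (n : ℕ) (hn : 0 < n) (lam : ℝ) :
    ENNReal.ofReal
        (∑ p : (Fin n → X) × (Fin n → X),
          if lam < f (empDist n p.1) (empDist n p.2) then
            (∏ i, P (p.1 i)) * (∏ i, P (p.2 i)) else 0) ≤
      ((n + 1 : ENNReal)) ^ (2 * Fintype.card X) *
        EReal.exp (-(n : EReal) * Upsilon f P lam) := by
  set bound := EReal.exp (-(n : EReal) * Upsilon f P lam)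
  set w : (Fin n → X) → ℝ≥0∞ := fun x => ENNReal.ofReal (∏ i, empDist n x (x i))
  have hprod_nonneg (x : Fin n → X) : 0 ≤ ∏ i, P (x i) := prod_nonneg fun i _ => hP.1 _
  rw [ENNReal.ofReal_sum_of_nonneg fun p _ =>
    ite_nonneg (mul_nonneg (hprod_nonneg p.1) (hprod_nonneg p.2)) le_rfl]
  calc ∑ p : (Fin n → X) × (Fin n → X), ENNReal.ofReal
          (if lam < f (empDist n p.1) (empDist n p.2) then
            (∏ i, P (p.1 i)) * (∏ i, P (p.2 i)) else 0)
      ≤ ∑ p : (Fin n → X) × (Fin n → X), bound * (w p.1 * w p.2) := by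
        refine sum_le_sum fun p _ => ?_
        split_ifs with h
        · exact ofReal_prod_mul_prod_le_exp_neg_mul_Upsilon_mul hP.1 hn h.le
        · simp
    _ = bound * ((∑ x, w x) * ∑ y, w y) := by
        rw [← mul_sum, Fintype.sum_prod_type, sum_mul_sum]
    _ ≤ bound * (((n : ℝ≥0∞) + 1) ^ Fintype.card X * ((n : ℝ≥0∞) + 1) ^ Fintype.card X) := by
        gcongr <;> exact sum_ofReal_prod_empDist_le hn
    _ = ((n + 1 : ENNReal)) ^ (2 * Fintype.card X) * bound := by ring

open Classical in
/-- Method-of-types bound: the probability that the pair of empirical distributions of two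
independent i.i.d. sequences (both from `P`) has score exceeding `λ` is at most
`(n+1)^{2|X|} · exp(−n·Υ(P,λ))`. -/
theorem prob_score_gt_bound [Nonempty X] [DecidableEq X]
    (f : (X → ℝ) → (X → ℝ) → ℝ)
    (hf0 : ∀ P Q, IsProbVec P → IsProbVec Q → 0 ≤ f P Q)
    (hfc : ContinuousOn (fun pq : (X → ℝ) × (X → ℝ) => f pq.1 pq.2)
      {pq | IsProbVec pq.1 ∧ IsProbVec pq.2})
    (P : X → ℝ) (hP : IsProbVec P)
    (n : ℕ) (hn : 0 < n) (lam : ℝ) (hlam : 0 < lam) :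
    ENNReal.ofReal
        (∑ p : (Fin n → X) × (Fin n → X),
          if lam < f (empDist n p.1) (empDist n p.2) then
            (∏ i, P (p.1 i)) * (∏ i, P (p.2 i)) else 0) ≤
      ((n + 1 : ENNReal)) ^ (2 * Fintype.card X) *
        EReal.exp (-(n : EReal) * Upsilon f P lam) :=
  prob_score_gt_bound_general f P hP n hn lam
end
end
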